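/- arXiv:2401.02024 — 6 statements merged into one kernel-verified Lean document; each statement's English description precedes it below -/
import Mathlib

section
/- Let ε ∈ ℝ. Let ρ, σ : ℝ → ℝ be twice continuously differentiable with compact support and let u, v : ℝ → ℝ be twice continuously differentiable. Then ∫_ℝ [(−ε ρ''(x) − (ρ u')'(x)) − (−(σ v')'(x))] · (u(x) − v(x)) dx + ∫_ℝ (ρ(x) − σ(x)) · [(ε u''(x) − (1/2) u'(x)² + ρ(x)) − (−(1/2) v'(x)² + σ(x))] dx = ∫_ℝ [(ρ(x) − σ(x))² + ((ρ(x) + σ(x))/2) (u'(x) − v'(x))²] dx + ε ∫_ℝ (ρ(x) v''(x) − σ(x) u''(x)) dx. -/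
/-!
Write `w = u - v`. Pointwise, the integrands on the left minus those on the right form the
derivative of the flux `ε (ρ w' - ρ' w) - (ρ u' - σ v') w`: its first part produces the viscous
terms `ε (ρ w'' - ρ'' w)`, its second the transport terms, and what is left is the identity
`(ρ - σ) (v'² - u'²) / 2 + (ρ u' - σ v') (u' - v') = (ρ + σ) (u' - v')² / 2`.
Every term of the flux carries a factor `ρ`, `ρ'` or `σ`, so it has compact support and its
derivative integrates to zero.
-/

open MeasureTheory

noncomputable def dualityFlux (ε : ℝ) (ρ σ u v : ℝ → ℝ) (x : ℝ) : ℝ :=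
  ε * (ρ x * (deriv u x - deriv v x) - deriv ρ x * (u x - v x))
    - (ρ x * deriv u x - σ x * deriv v x) * (u x - v x)

section DualityFlux

variable {ε : ℝ} {ρ σ u v : ℝ → ℝ}

theorem hasCompactSupport_dualityFlux (hρc : HasCompactSupport ρ) (hσc : HasCompactSupport σ) :
    HasCompactSupport (dualityFlux ε ρ σ u v) :=
  (hρc.mul_right.sub hρc.deriv.mul_right).mul_left.sub (hρc.mul_right.sub hσc.mul_right).mul_right

theorem hasDerivAt_dualityFlux (hρ : ContDiff ℝ 2 ρ) (hσ : ContDiff ℝ 1 σ)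
    (hu : ContDiff ℝ 2 u) (hv : ContDiff ℝ 2 v) (x : ℝ) :
    HasDerivAt (dualityFlux ε ρ σ u v)
      (ε * (ρ x * (deriv (deriv u) x - deriv (deriv v) x) - deriv (deriv ρ) x * (u x - v x))
        - (deriv (fun y => ρ y * deriv u y) x - deriv (fun y => σ y * deriv v y) x) * (u x - v x)
        - (ρ x * deriv u x - σ x * deriv v x) * (deriv u x - deriv v x)) x := by
  have d {f : ℝ → ℝ} (hf : ContDiff ℝ 1 f) : HasDerivAt f (deriv f x) x :=
    (hf.differentiable one_ne_zero x).hasDerivAt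
  have hρ1 : ContDiff ℝ 1 ρ := hρ.of_le one_le_two
  have hw := (d (hu.of_le one_le_two)).sub (d (hv.of_le one_le_two))
  have hflux :=
    ((((d hρ1).mul ((d hu.deriv').sub (d hv.deriv'))).sub ((d hρ.deriv').mul hw)).const_mul ε).sub
      (((d (hρ1.mul hu.deriv')).sub (d (hσ.mul hv.deriv'))).mul hw)
  exact hflux.congr_deriv (by simp only [Pi.sub_apply]; ring)

theorem integrable_dualityFlux (hρ : ContDiff ℝ 2 ρ) (hρc : HasCompactSupport ρ)
    (hσ : ContDiff ℝ 1 σ) (hσc : HasCompactSupport σ) (hu : ContDiff ℝ 2 u) (hv : ContDiff ℝ 2 v) :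
    Integrable (dualityFlux ε ρ σ u v) :=
  (continuous_iff_continuousAt.2 fun x => (hasDerivAt_dualityFlux hρ hσ hu hv x).continuousAt)
    |>.integrable_of_hasCompactSupport (hasCompactSupport_dualityFlux hρc hσc)

end DualityFlux

theorem integral_add_integral_eq_of_hasDerivAt {F A B C D : ℝ → ℝ} (c : ℝ)
    (hA : Integrable A) (hB : Integrable B) (hC : Integrable C) (hD : Integrable D)
    (hF : Integrable F) (hF' : ∀ x, HasDerivAt F (A x + B x - (C x + c * D x)) x) :
    (∫ x, A x) + ∫ x, B x = (∫ x, C x) + c * ∫ x, D x := by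
  have hAB : Integrable fun x => A x + B x := hA.add hB
  have hCD : Integrable fun x => C x + c * D x := hC.add (hD.const_mul c)
  have hzero := integral_eq_zero_of_hasDerivAt_of_integrable hF' (hAB.sub hCD) hF
  rw [integral_sub hAB hCD, integral_add hA hB, integral_add hC (hD.const_mul c),
    integral_const_mul] at hzero
  exact sub_eq_zero.mp hzero

/-- Mean field games duality identity comparing the viscous MFG system with the
first-order system, at a fixed time. -/
theorem mfg_duality_identity (ε : ℝ) (ρ σ u v : ℝ → ℝ)
    (hρ : ContDiff ℝ 2 ρ) (hρc : HasCompactSupport ρ)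
    (hσ : ContDiff ℝ 2 σ) (hσc : HasCompactSupport σ)
    (hu : ContDiff ℝ 2 u) (hv : ContDiff ℝ 2 v) :
    (∫ x : ℝ, ((-ε * deriv (deriv ρ) x - deriv (fun y => ρ y * deriv u y) x)
        - (-(deriv (fun y => σ y * deriv v y) x))) * (u x - v x))
      + (∫ x : ℝ, (ρ x - σ x) *
          ((ε * deriv (deriv u) x - (1/2) * (deriv u x)^2 + ρ x)
            - (-(1/2) * (deriv v x)^2 + σ x)))
    = (∫ x : ℝ, ((ρ x - σ x)^2 + ((ρ x + σ x)/2) * (deriv u x - deriv v x)^2))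
      + ε * ∫ x : ℝ, (ρ x * deriv (deriv v) x - σ x * deriv (deriv u) x) := by
  have hσ1 : ContDiff ℝ 1 σ := hσ.of_le one_le_two
  have hu1 : ContDiff ℝ 1 (deriv u) := hu.deriv'
  have hv1 : ContDiff ℝ 1 (deriv v) := hv.deriv'
  have : Continuous (deriv (deriv ρ)) := (hρ.deriv' (n := 1)).continuous_deriv_one
  have : Continuous (deriv (deriv u)) := hu1.continuous_deriv_one
  have : Continuous (deriv (deriv v)) := hv1.continuous_deriv_one
  have : Continuous (deriv fun y => ρ y * deriv u y) :=
    ((hρ.of_le one_le_two).mul hu1).continuous_deriv_one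
  have : Continuous (deriv fun y => σ y * deriv v y) := (hσ1.mul hv1).continuous_deriv_one
  refine integral_add_integral_eq_of_hasDerivAt ε ?_ ?_ ?_ ?_
    (integrable_dualityFlux hρ hρc hσ1 hσc hu hv)
    (fun x => (hasDerivAt_dualityFlux hρ hσ1 hu hv x).congr_deriv (by ring))
  · exact (by fun_prop : Continuous _).integrable_of_hasCompactSupport
      ((hρc.deriv.deriv.mul_left.sub hρc.mul_right.deriv).sub hσc.mul_right.deriv.neg).mul_right
  · exact (by fun_prop : Continuous _).integrable_of_hasCompactSupport (hρc.sub hσc).mul_right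
  · exact (by fun_prop : Continuous _).integrable_of_hasCompactSupport
      (((hρc.sub hσc).comp_left (g := fun t : ℝ => t ^ 2) (by norm_num)).add
        ((hρc.add hσc).comp_left (g := fun t : ℝ => t / 2) (by norm_num)).mul_right)
  · exact (by fun_prop : Continuous _).integrable_of_hasCompactSupport
      (hρc.mul_right.sub hσc.mul_right)
end

section
/- Let ε ∈ ℝ, let ρ : ℝ → ℝ be three times continuously differentiable with compact support, and let u : ℝ → ℝ be three times continuously differentiable. Then ∫_ℝ (−ε ρ'' − (ρ u')')'(x) · u'(x) dx + ∫_ℝ ρ'(x) · (ε u'' − (1/2)(u')² + ρ)'(x) dx = ∫_ℝ [ρ'(x)² + ρ(x) u''(x)²] dx. -/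
/-!
With `F = -ε ρ'' - (ρ u')'` and `G = ε u'' - (u')²/2 + ρ`, the product rule gives pointwise
`F' u' + ρ' G' = (F u' + ε ρ' u'')' + ρ'² + ρ u''²`. The function `F u' + ε ρ' u''` is
`C¹` and inherits compact support from `ρ`, so its derivative integrates to zero over `ℝ`.
-/

open MeasureTheory

theorem HasCompactSupport.integral_deriv_eq_zero {E : Type*} [NormedAddCommGroup E]
    [NormedSpace ℝ E] {f : ℝ → E} (hf : ContDiff ℝ 1 f) (h2f : HasCompactSupport f) :
    ∫ x, deriv f x = 0 :=
  integral_eq_zero_of_hasDerivAt_of_integrable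
    (fun x => (hf.differentiable one_ne_zero x).hasDerivAt)
    ((hf.continuous_deriv le_rfl).integrable_of_hasCompactSupport h2f.deriv)
    (hf.continuous.integrable_of_hasCompactSupport h2f)

theorem HasCompactSupport.integral_deriv_add {E : Type*} [NormedAddCommGroup E]
    [NormedSpace ℝ E] {f g : ℝ → E} (hf : ContDiff ℝ 1 f) (h2f : HasCompactSupport f)
    (hg : Integrable g) : ∫ x, (deriv f x + g x) = ∫ x, g x := by
  rw [integral_add ((hf.continuous_deriv le_rfl).integrable_of_hasCompactSupport h2f.deriv) hg,
    h2f.integral_deriv_eq_zero hf, zero_add]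

noncomputable def mfgDensityRate (ε : ℝ) (ρ u : ℝ → ℝ) (x : ℝ) : ℝ :=
  -ε * deriv (deriv ρ) x - deriv (fun y => ρ y * deriv u y) x

noncomputable def mfgValueRate (ε : ℝ) (ρ u : ℝ → ℝ) (x : ℝ) : ℝ :=
  ε * deriv (deriv u) x - (1/2) * (deriv u x)^2 + ρ x

noncomputable def mfgFlux (ε : ℝ) (ρ u : ℝ → ℝ) (x : ℝ) : ℝ :=
  mfgDensityRate ε ρ u x * deriv u x + ε * (deriv ρ x * deriv (deriv u) x)

section
variable (ε : ℝ) {ρ u : ℝ → ℝ}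

theorem hasCompactSupport_mfgDensityRate (hρ : HasCompactSupport ρ) :
    HasCompactSupport (mfgDensityRate ε ρ u) :=
  (hρ.deriv.deriv.mul_left.sub hρ.mul_right.deriv :)

theorem hasCompactSupport_mfgFlux (hρ : HasCompactSupport ρ) :
    HasCompactSupport (mfgFlux ε ρ u) :=
  ((hasCompactSupport_mfgDensityRate ε hρ).mul_right.add hρ.deriv.mul_right.mul_left :)

theorem contDiff_mfgDensityRate (hρ : ContDiff ℝ 3 ρ) (hu : ContDiff ℝ 3 u) :
    ContDiff ℝ 1 (mfgDensityRate ε ρ u) := by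
  have : ContDiff ℝ 2 (fun y => ρ y * deriv u y) := (hρ.of_le (by norm_num)).mul hu.deriv'
  unfold mfgDensityRate
  fun_prop (disch := norm_num)

theorem contDiff_mfgValueRate (hρ : ContDiff ℝ 3 ρ) (hu : ContDiff ℝ 3 u) :
    ContDiff ℝ 1 (mfgValueRate ε ρ u) := by
  have hu' : ContDiff ℝ 2 (deriv u) := hu.deriv'
  have hu'' : ContDiff ℝ 1 (deriv (deriv u)) := hu'.deriv'
  unfold mfgValueRate
  fun_prop (disch := norm_num)

theorem contDiff_mfgFlux (hρ : ContDiff ℝ 3 ρ) (hu : ContDiff ℝ 3 u) :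
    ContDiff ℝ 1 (mfgFlux ε ρ u) := by
  have hρ' : ContDiff ℝ 2 (deriv ρ) := hρ.deriv'
  have hu' : ContDiff ℝ 2 (deriv u) := hu.deriv'
  have hu'' : ContDiff ℝ 1 (deriv (deriv u)) := hu'.deriv'
  have := contDiff_mfgDensityRate ε hρ hu
  unfold mfgFlux
  fun_prop (disch := norm_num)

theorem mfgDensityRate_eq (hρ : Differentiable ℝ ρ) (hu : Differentiable ℝ (deriv u))
    (x : ℝ) : mfgDensityRate ε ρ u x =
      -ε * deriv (deriv ρ) x - (deriv ρ x * deriv u x + ρ x * deriv (deriv u) x) := by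
  rw [mfgDensityRate, deriv_fun_mul (hρ x) (hu x)]

theorem deriv_mfgValueRate (hρ : Differentiable ℝ ρ) (hu : Differentiable ℝ (deriv u))
    (hu' : Differentiable ℝ (deriv (deriv u))) (x : ℝ) :
    deriv (mfgValueRate ε ρ u) x =
      ε * deriv (deriv (deriv u)) x - deriv u x * deriv (deriv u) x + deriv ρ x :=
  ((((hu' x).hasDerivAt.const_mul ε).sub (((hu x).hasDerivAt.pow 2).const_mul (1/2 : ℝ))).add
    (hρ x).hasDerivAt).deriv.trans (by ring)

theorem deriv_mfgFlux (hF : Differentiable ℝ (mfgDensityRate ε ρ u))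
    (hρ : Differentiable ℝ (deriv ρ)) (hu : Differentiable ℝ (deriv u))
    (hu' : Differentiable ℝ (deriv (deriv u))) (x : ℝ) :
    deriv (mfgFlux ε ρ u) x =
      deriv (mfgDensityRate ε ρ u) x * deriv u x + mfgDensityRate ε ρ u x * deriv (deriv u) x
        + ε * (deriv (deriv ρ) x * deriv (deriv u) x + deriv ρ x * deriv (deriv (deriv u)) x) :=
  (((hF x).hasDerivAt.mul (hu x).hasDerivAt).add
    (((hρ x).hasDerivAt.mul (hu' x).hasDerivAt).const_mul ε)).deriv

theorem mfg_integrand_eq (hρ : ContDiff ℝ 3 ρ) (hu : ContDiff ℝ 3 u) (x : ℝ) :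
    deriv (mfgDensityRate ε ρ u) x * deriv u x + deriv ρ x * deriv (mfgValueRate ε ρ u) x =
      deriv (mfgFlux ε ρ u) x + (deriv ρ x ^ 2 + ρ x * deriv (deriv u) x ^ 2) := by
  have hρ' : ContDiff ℝ 2 (deriv ρ) := hρ.deriv'
  have hu' : ContDiff ℝ 2 (deriv u) := hu.deriv'
  have hu'' : ContDiff ℝ 1 (deriv (deriv u)) := hu'.deriv'
  have hρd := hρ.differentiable (by norm_num)
  have hu'd := hu'.differentiable (by norm_num)
  have hu''d := hu''.differentiable one_ne_zero
  rw [deriv_mfgFlux ε ((contDiff_mfgDensityRate ε hρ hu).differentiable one_ne_zero)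
      (hρ'.differentiable (by norm_num)) hu'd hu''d,
    deriv_mfgValueRate ε hρd hu'd hu''d, mfgDensityRate_eq ε hρd hu'd]
  ring

end

/-- Static form of the identity
`d/dt ∫ ∂ₓρ ∂ₓu dx = ∫ (∂ₓρ)² + ρ (∂ₓ²u)² dx` for the viscous MFG system. -/
theorem mfg_derivative_identity (ε : ℝ) (ρ u : ℝ → ℝ)
    (hρ : ContDiff ℝ 3 ρ) (hρc : HasCompactSupport ρ)
    (hu : ContDiff ℝ 3 u) :
    (∫ x : ℝ, deriv (fun y => -ε * deriv (deriv ρ) y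
        - deriv (fun z => ρ z * deriv u z) y) x * deriv u x)
      + (∫ x : ℝ, deriv ρ x * deriv (fun y => ε * deriv (deriv u) y
          - (1/2) * (deriv u y)^2 + ρ y) x)
    = ∫ x : ℝ, ((deriv ρ x)^2 + ρ x * (deriv (deriv u) x)^2) := by
  have hρ' : ContDiff ℝ 2 (deriv ρ) := hρ.deriv'
  have hu' : ContDiff ℝ 2 (deriv u) := hu.deriv'
  have hu'' : ContDiff ℝ 1 (deriv (deriv u)) := hu'.deriv'
  have hF := contDiff_mfgDensityRate ε hρ hu
  have hFc := hasCompactSupport_mfgDensityRate (u := u) ε hρc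
  have hG := contDiff_mfgValueRate ε hρ hu
  have hρ_rate : Integrable fun x => deriv (mfgDensityRate ε ρ u) x * deriv u x :=
    ((hF.continuous_deriv le_rfl).mul hu'.continuous).integrable_of_hasCompactSupport
      hFc.deriv.mul_right
  have hu_rate : Integrable fun x => deriv ρ x * deriv (mfgValueRate ε ρ u) x :=
    (hρ'.continuous.mul (hG.continuous_deriv le_rfl)).integrable_of_hasCompactSupport
      hρc.deriv.mul_right
  have hrhs : Integrable fun x => deriv ρ x ^ 2 + ρ x * deriv (deriv u) x ^ 2 :=
    ((hρ'.continuous.pow 2).add (hρ.continuous.mul (hu''.continuous.pow 2)))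
      |>.integrable_of_hasCompactSupport
        (by simpa only [sq] using hρc.deriv.mul_right.add hρc.mul_right)
  change (∫ x, deriv (mfgDensityRate ε ρ u) x * deriv u x)
    + ∫ x, deriv ρ x * deriv (mfgValueRate ε ρ u) x = _
  rw [← integral_add hρ_rate hu_rate]
  simp_rw [mfg_integrand_eq ε hρ hu]
  exact (hasCompactSupport_mfgFlux ε hρc).integral_deriv_add (contDiff_mfgFlux ε hρ hu) hrhs
end

section
/- Let T > 0, let y : [0, T] → ℝ be differentiable with y(t) ≥ 0 for all t and y(0) = 0, and let g : [0, T] → ℝ be continuous with g ≥ 0. Assume y'(t) ≤ 2 √(y(t)) · g(t) for all t ∈ [0, T]. Then for every t ∈ [0, T], y(t) ≤ (∫_0^t g(s) ds)², and consequently y(t) ≤ t · ∫_0^t g(s)² ds. -/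
/-!
Write `G t = ∫₀ᵗ g`. For every `ε > 0` the function `(G t + ε (1 + t))²` is a strict upper barrier
for `y`: at a first point where `y` reaches it, `√y = G + ε (1 + t) > 0`, so
`y' ≤ 2 √y g < 2 (G + ε (1 + t)) (g + ε)`, the barrier's derivative. Letting `ε → 0` gives
`y ≤ G²`, and `G(t)² ≤ t ∫₀ᵗ g²` is Jensen's inequality for the square on the average of `g`.
-/

open MeasureTheory Set Filter Topology

theorem sq_intervalIntegral_le_mul_intervalIntegral_sq {f : ℝ → ℝ} {a b : ℝ}
    (hf : IntervalIntegrable f volume a b)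
    (hf2 : IntervalIntegrable (fun x ↦ f x ^ 2) volume a b) :
    (∫ x in a..b, f x) ^ 2 ≤ (b - a) * ∫ x in a..b, f x ^ 2 := by
  rcases eq_or_ne a b with rfl | hab
  · simp
  have jensen : (⨍ x in a..b, f x) ^ 2 ≤ ⨍ x in a..b, f x ^ 2 :=
    (even_two.convexOn_pow (𝕜 := ℝ)).map_set_average_le (continuous_pow 2).continuousOn
      isClosed_univ (by simp [sub_eq_zero, hab.symm]) (by simp) (by simp)
      ((intervalIntegrable_iff (μ := volume)).1 hf) ((intervalIntegrable_iff (μ := volume)).1 hf2)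
  rw [interval_average_eq, interval_average_eq, smul_eq_mul, smul_eq_mul, mul_pow] at jensen
  have hba : b - a ≠ 0 := sub_ne_zero.2 hab.symm
  calc (∫ x in a..b, f x) ^ 2 = (b - a) ^ 2 * ((b - a)⁻¹ ^ 2 * (∫ x in a..b, f x) ^ 2) := by
        field_simp
    _ ≤ (b - a) ^ 2 * ((b - a)⁻¹ * ∫ x in a..b, f x ^ 2) := by gcongr
    _ = (b - a) * ∫ x in a..b, f x ^ 2 := by field_simp

theorem le_sq_of_hasDerivWithinAt_le_two_sqrt_mul {y y' G g : ℝ → ℝ} {a b : ℝ}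
    (hy : ContinuousOn y (Icc a b)) (hy' : ∀ x ∈ Ico a b, HasDerivWithinAt y (y' x) (Ici x) x)
    (hG : ContinuousOn G (Icc a b)) (hG' : ∀ x ∈ Ico a b, HasDerivWithinAt G (g x) (Ici x) x)
    (hG_nonneg : ∀ x ∈ Icc a b, 0 ≤ G x) (ha : y a ≤ G a ^ 2)
    (bound : ∀ x ∈ Ico a b, y' x ≤ 2 * √(y x) * g x) :
    ∀ ⦃x⦄, x ∈ Icc a b → y x ≤ G x ^ 2 := by
  intro x hx
  have hab : a ≤ b := hx.1.trans hx.2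
  have fence : ∀ ε > 0, y x ≤ (G x + ε * (1 + (x - a))) ^ 2 := by
    intro ε hε
    set B : ℝ → ℝ := fun z ↦ G z + ε * (1 + (z - a))
    have hB_pos : ∀ z ∈ Ico a b, 0 < B z := fun z hz ↦ by
      have := hG_nonneg z (Ico_subset_Icc_self hz)
      have : 0 < ε * (1 + (z - a)) := mul_pos hε (by linarith [hz.1])
      positivity
    refine image_le_of_deriv_right_lt_deriv_boundary' (B := fun z ↦ B z ^ 2)
      (B' := fun z ↦ 2 * B z * (g z + ε)) hy hy' ?_ (by fun_prop) (fun z hz ↦ ?_)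
      (fun z hz hyz ↦ ?_) hx
    · have := hG_nonneg a (left_mem_Icc.2 hab)
      calc y a ≤ G a ^ 2 := ha
        _ ≤ B a ^ 2 := by gcongr; simp [B, hε.le]
    · have hlin : HasDerivWithinAt (fun z ↦ ε * (1 + (z - a))) ε (Ici z) z := by
        simpa using (((hasDerivAt_id z).sub_const a).const_add 1 |>.const_mul ε).hasDerivWithinAt
      exact ((hG' z hz).add hlin).pow 2 |>.congr_deriv (by simp [B])
    · have hsqrt : √(y z) = B z := by rw [hyz, Real.sqrt_sq (hB_pos z hz).le]
      calc y' z ≤ 2 * √(y z) * g z := bound z hz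
        _ = 2 * B z * g z := by rw [hsqrt]
        _ < 2 * B z * (g z + ε) := by have := hB_pos z hz; gcongr; linarith
  have hlim : Tendsto (fun ε ↦ (G x + ε * (1 + (x - a))) ^ 2) (𝓝[>] 0) (𝓝 (G x ^ 2)) := by
    have : Continuous fun ε : ℝ ↦ (G x + ε * (1 + (x - a))) ^ 2 := by fun_prop
    simpa using (this.tendsto 0).mono_left nhdsWithin_le_nhds
  exact ge_of_tendsto hlim (eventually_nhdsWithin_of_forall fence)

theorem le_sq_intervalIntegral_of_deriv_le_two_sqrt_mul {y g : ℝ → ℝ} {a b : ℝ}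
    (hy : ∀ t ∈ Icc a b, DifferentiableAt ℝ y t) (hya : y a = 0) (hg : ContinuousOn g (Icc a b))
    (hg_nonneg : ∀ t ∈ Icc a b, 0 ≤ g t) (bound : ∀ t ∈ Icc a b, deriv y t ≤ 2 * √(y t) * g t) :
    ∀ ⦃t⦄, t ∈ Icc a b → y t ≤ (∫ s in a..t, g s) ^ 2 := by
  intro t ht
  have hab : a ≤ b := ht.1.trans ht.2
  set g' := IccExtend hab ((Icc a b).domRestrict g)
  have hg'_eq : ∀ s ∈ Icc a b, g' s = g s := fun s hs ↦ IccExtend_of_mem _ _ hs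
  have hG : ∀ s, HasDerivAt (fun u ↦ ∫ r in a..u, g' r) (g' s) s := fun s ↦
    (hg.domRestrict.Icc_extend'.integral_hasStrictDerivAt a s).hasDerivAt
  have hg'_int : ∀ s ∈ Icc a b, ∫ r in a..s, g' r = ∫ r in a..s, g r := fun s hs ↦
    intervalIntegral.integral_congr fun r hr ↦ by
      rw [uIcc_of_le hs.1] at hr
      exact hg'_eq r ⟨hr.1, hr.2.trans hs.2⟩
  rw [← hg'_int t ht]
  refine le_sq_of_hasDerivWithinAt_le_two_sqrt_mul
    (fun s hs ↦ (hy s hs).continuousAt.continuousWithinAt)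
    (fun s hs ↦ (hy s (Ico_subset_Icc_self hs)).hasDerivAt.hasDerivWithinAt)
    (fun s _ ↦ (hG s).continuousAt.continuousWithinAt) (fun s _ ↦ (hG s).hasDerivWithinAt)
    (fun s hs ↦ ?_) (by simp [hya]) (fun s hs ↦ ?_) ht
  · rw [hg'_int s hs]
    exact intervalIntegral.integral_nonneg hs.1 fun r hr ↦ hg_nonneg r ⟨hr.1, hr.2.trans hs.2⟩
  · rw [hg'_eq s (Ico_subset_Icc_self hs)]
    exact bound s (Ico_subset_Icc_self hs)

theorem sqrt_gronwall_general (T : ℝ) (y g : ℝ → ℝ)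
    (hy : ∀ t ∈ Set.Icc (0:ℝ) T, DifferentiableAt ℝ y t)
    (hy0 : y 0 = 0)
    (hg : ContinuousOn g (Set.Icc (0:ℝ) T))
    (hgnn : ∀ t ∈ Set.Icc (0:ℝ) T, 0 ≤ g t)
    (hineq : ∀ t ∈ Set.Icc (0:ℝ) T, deriv y t ≤ 2 * Real.sqrt (y t) * g t) :
    ∀ t ∈ Set.Icc (0:ℝ) T,
      y t ≤ (∫ s in (0:ℝ)..t, g s)^2 ∧ y t ≤ t * ∫ s in (0:ℝ)..t, (g s)^2 := by
  intro t ht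
  have hy_le := le_sq_intervalIntegral_of_deriv_le_two_sqrt_mul hy hy0 hg hgnn hineq ht
  have hg_t : ContinuousOn g (Icc 0 t) := hg.mono (Icc_subset_Icc_right ht.2)
  refine ⟨hy_le, hy_le.trans ?_⟩
  simpa using sq_intervalIntegral_le_mul_intervalIntegral_sq
    (hg_t.intervalIntegrable_of_Icc ht.1) ((hg_t.pow 2).intervalIntegrable_of_Icc ht.1)

/-- Square-root Grönwall lemma: if `y ≥ 0`, `y 0 = 0` and
`y' ≤ 2 √y · g` on `[0,T]`, then `y t ≤ (∫₀ᵗ g)²` and `y t ≤ t ∫₀ᵗ g²`. -/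
theorem sqrt_gronwall (T : ℝ) (hT : 0 < T) (y g : ℝ → ℝ)
    (hy : ∀ t ∈ Set.Icc (0:ℝ) T, DifferentiableAt ℝ y t)
    (hynn : ∀ t ∈ Set.Icc (0:ℝ) T, 0 ≤ y t)
    (hy0 : y 0 = 0)
    (hg : ContinuousOn g (Set.Icc (0:ℝ) T))
    (hgnn : ∀ t ∈ Set.Icc (0:ℝ) T, 0 ≤ g t)
    (hineq : ∀ t ∈ Set.Icc (0:ℝ) T, deriv y t ≤ 2 * Real.sqrt (y t) * g t) :
    ∀ t ∈ Set.Icc (0:ℝ) T,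
      y t ≤ (∫ s in (0:ℝ)..t, g s)^2 ∧ y t ≤ t * ∫ s in (0:ℝ)..t, (g s)^2 :=
  sqrt_gronwall_general T y g hy hy0 hg hgnn hineq
end

section
/- Let m > 2, C > 0, and let a : (0, 1/2] → [0, ∞) be measurable. Assume that for all h, h' with 0 < h < h' ≤ 1/2 one has ∫_h^{h'} a(s)^m ds ≤ C/(h' − h). Then ∫_0^{1/2} a(s) ds ≤ C^{1/m} / (2^{(m−2)/m} − 1); in particular ∫_0^{1/2} a(s) ds is finite. -/
/-!
Cut `(0, 1/2]` into the dyadic pieces `(2⁻⁽ⁿ⁺²⁾, 2⁻⁽ⁿ⁺¹⁾]`, of length `ℓₙ = 2⁻⁽ⁿ⁺²⁾`. On each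
piece Hölder's inequality and the hypothesis give
`∫ a ≤ (∫ a ^ m) ^ (1/m) ℓₙ ^ (1 - 1/m) ≤ (C / ℓₙ) ^ (1/m) ℓₙ ^ (1 - 1/m)
  = C ^ (1/m) ℓₙ ^ ((m-2)/m)`,
and since `m > 2` these bounds form a geometric series of ratio `2 ^ (-(m-2)/m) < 1`.
-/

open MeasureTheory Set ENNReal

theorem lintegral_le_lintegral_rpow_mul_measure_univ {α : Type*} [MeasurableSpace α]
    {μ : Measure α} {f : α → ℝ≥0∞} {p : ℝ} (hp : 1 ≤ p) (hf : AEMeasurable f μ) :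
    ∫⁻ x, f x ∂μ ≤ (∫⁻ x, f x ^ p ∂μ) ^ (1 / p) * μ univ ^ (1 - 1 / p) := by
  simpa [eLpNorm'] using
    eLpNorm'_le_eLpNorm'_mul_rpow_measure_univ one_pos hp hf.aestronglyMeasurable

theorem setLIntegral_le_of_setLIntegral_rpow_le_div {α : Type*} [MeasurableSpace α]
    {μ : Measure α} {s : Set α} {f : α → ℝ≥0∞} {m C ℓ : ℝ} (hm : 1 ≤ m) (hC : 0 ≤ C)
    (hℓ : 0 < ℓ) (hs : μ s = ENNReal.ofReal ℓ) (hf : AEMeasurable f (μ.restrict s))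
    (hfm : ∫⁻ x in s, f x ^ m ∂μ ≤ ENNReal.ofReal (C / ℓ)) :
    ∫⁻ x in s, f x ∂μ ≤ ENNReal.ofReal (C ^ (1 / m) * ℓ ^ ((m - 2) / m)) := by
  calc ∫⁻ x in s, f x ∂μ
      ≤ (∫⁻ x in s, f x ^ m ∂μ) ^ (1 / m) * μ s ^ (1 - 1 / m) := by
        simpa using lintegral_le_lintegral_rpow_mul_measure_univ hm hf
    _ ≤ ENNReal.ofReal (C / ℓ) ^ (1 / m) * ENNReal.ofReal ℓ ^ (1 - 1 / m) := by
        have hm₀ : 0 < m := by linarith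
        rw [hs]
        gcongr
    _ = ENNReal.ofReal (C ^ (1 / m) * ℓ ^ ((m - 2) / m)) := by
        rw [ofReal_rpow_of_nonneg (by positivity) (by positivity),
          ofReal_rpow_of_pos hℓ, ← ofReal_mul (by positivity),
          Real.div_rpow hC hℓ.le, div_mul_eq_mul_div, mul_div_assoc, ← Real.rpow_sub hℓ]
        congr 3
        field_simp
        ring

theorem ofReal_rpow_le_ofReal_rpow (x : ℝ) {p : ℝ} (hp : 0 < p) :
    ENNReal.ofReal x ^ p ≤ ENNReal.ofReal (x ^ p) := by
  rcases le_total 0 x with hx | hx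
  · exact (ofReal_rpow_of_nonneg hx hp.le).le
  · simp [ofReal_of_nonpos hx, zero_rpow_of_pos hp]

theorem setLIntegral_Ioc_ofReal_le_of_setLIntegral_rpow_le_div {a : ℝ → ℝ} (ha : Measurable a)
    {m C h h' : ℝ} (hm : 1 ≤ m) (hC : 0 ≤ C) (hh' : h < h')
    (ham : ∫⁻ s in Ioc h h', ENNReal.ofReal (a s ^ m) ≤ ENNReal.ofReal (C / (h' - h))) :
    ∫⁻ s in Ioc h h', ENNReal.ofReal (a s)
      ≤ ENNReal.ofReal (C ^ (1 / m) * (h' - h) ^ ((m - 2) / m)) :=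
  setLIntegral_le_of_setLIntegral_rpow_le_div hm hC (sub_pos.2 hh') Real.volume_Ioc
    (ENNReal.measurable_ofReal.comp ha).aemeasurable
    ((lintegral_mono fun s => ofReal_rpow_le_ofReal_rpow (a s) (by linarith)).trans ham)

theorem Ioc_zero_subset_iUnion_Ioc_pow {r : ℝ} (hr₀ : 0 < r) (hr₁ : r < 1) :
    Ioc 0 r ⊆ ⋃ n : ℕ, Ioc (r ^ (n + 2)) (r ^ (n + 1)) := by
  rintro x ⟨hx₀, hxr⟩
  obtain ⟨n, hlt, hle⟩ := exists_nat_pow_near_of_lt_one (div_pos hx₀ hr₀)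
    ((div_le_one hr₀).2 hxr) hr₀ hr₁
  refine mem_iUnion.2 ⟨n, ?_, ?_⟩
  · rwa [lt_div_iff₀ hr₀, ← pow_succ] at hlt
  · rwa [div_le_iff₀ hr₀, ← pow_succ] at hle

theorem setLIntegral_Ioc_zero_le_tsum_Ioc_pow {r : ℝ} (hr₀ : 0 < r) (hr₁ : r < 1)
    (f : ℝ → ℝ≥0∞) :
    ∫⁻ x in Ioc 0 r, f x ≤ ∑' n : ℕ, ∫⁻ x in Ioc (r ^ (n + 2)) (r ^ (n + 1)), f x :=
  (lintegral_mono_set (Ioc_zero_subset_iUnion_Ioc_pow hr₀ hr₁)).trans (lintegral_iUnion_le _ _)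

theorem tsum_ofReal_mul_half_pow_rpow_le {K θ : ℝ} (hK : 0 ≤ K) (hθ : 0 < θ) :
    ∑' n : ℕ, ENNReal.ofReal (K * ((1 / 2 : ℝ) ^ (n + 2)) ^ θ)
      ≤ ENNReal.ofReal (K / ((2 : ℝ) ^ θ - 1)) := by
  set c : ℝ := (1 / 2 : ℝ) ^ θ with hc
  have hc₀ : 0 < c := by positivity
  have hc₁ : c < 1 := Real.rpow_lt_one (by norm_num) (by norm_num) hθ
  have hterm (n : ℕ) : K * ((1 / 2 : ℝ) ^ (n + 2)) ^ θ = K * c ^ 2 * c ^ n := by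
    rw [← Real.rpow_pow_comm (by norm_num), pow_add, ← hc]
    ring
  have hsum :
      HasSum (fun n : ℕ => K * ((1 / 2 : ℝ) ^ (n + 2)) ^ θ) (K * c ^ 2 * (1 - c)⁻¹) := by
    simpa only [hterm] using (hasSum_geometric_of_lt_one hc₀.le hc₁).mul_left (K * c ^ 2)
  have htwo : (2 : ℝ) ^ θ - 1 = (1 - c) / c := by
    rw [hc, Real.div_rpow zero_le_one zero_le_two, Real.one_rpow]
    field_simp
  rw [← ofReal_tsum_of_nonneg (fun n => by positivity) hsum.summable, hsum.tsum_eq,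
    htwo, div_div_eq_mul_div, div_eq_mul_inv]
  have : 0 < 1 - c := by linarith
  gcongr
  exact pow_le_of_le_one hc₀.le hc₁.le two_ne_zero

theorem dyadic_integrability_lemma_general (m C : ℝ) (hm : 2 < m) (hC : 0 < C)
    (a : ℝ → ℝ) (ha : Measurable a)
    (hbound : ∀ h h' : ℝ, 0 < h → h < h' → h' ≤ 1/2 →
      (∫⁻ s in Set.Ioc h h', ENNReal.ofReal (a s ^ m))
        ≤ ENNReal.ofReal (C / (h' - h))) :
    (∫⁻ s in Set.Ioc (0:ℝ) (1/2), ENNReal.ofReal (a s))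
      ≤ ENNReal.ofReal (C ^ (1/m) / ((2:ℝ) ^ ((m-2)/m) - 1)) := by
  have hpiece (n : ℕ) : ∫⁻ s in Ioc ((1 / 2 : ℝ) ^ (n + 2)) ((1 / 2) ^ (n + 1)),
      ENNReal.ofReal (a s)
        ≤ ENNReal.ofReal (C ^ (1 / m) * ((1 / 2 : ℝ) ^ (n + 2)) ^ ((m - 2) / m)) := by
    have hlen : (1 / 2 : ℝ) ^ (n + 1) - (1 / 2) ^ (n + 2) = (1 / 2) ^ (n + 2) := by ring
    have hlt : (1 / 2 : ℝ) ^ (n + 2) < (1 / 2) ^ (n + 1) :=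
      pow_lt_pow_right_of_lt_one₀ one_half_pos one_half_lt_one (Nat.lt_succ_self _)
    have hle : (1 / 2 : ℝ) ^ (n + 1) ≤ 1 / 2 :=
      pow_le_of_le_one (by norm_num) (by norm_num) n.succ_ne_zero
    exact (setLIntegral_Ioc_ofReal_le_of_setLIntegral_rpow_le_div ha (by linarith) hC.le hlt
      (hbound _ _ (by positivity) hlt hle)).trans_eq (by rw [hlen])
  calc ∫⁻ s in Ioc (0 : ℝ) (1 / 2), ENNReal.ofReal (a s)
      ≤ ∑' n : ℕ, ∫⁻ s in Ioc ((1 / 2 : ℝ) ^ (n + 2)) ((1 / 2) ^ (n + 1)),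
          ENNReal.ofReal (a s) :=
        setLIntegral_Ioc_zero_le_tsum_Ioc_pow one_half_pos one_half_lt_one _
    _ ≤ _ := ENNReal.tsum_le_tsum hpiece
    _ ≤ _ := tsum_ofReal_mul_half_pow_rpow_le (by positivity) (by apply div_pos <;> linarith)

/-- Dyadic summation lemma: if `∫_h^{h'} a^m ≤ C/(h'-h)` for all
`0 < h < h' ≤ 1/2` and `m > 2`, then `∫_0^{1/2} a ≤ C^{1/m}/(2^{(m-2)/m} - 1)`;
in particular the integral is finite. -/
theorem dyadic_integrability_lemma (m C : ℝ) (hm : 2 < m) (hC : 0 < C)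
    (a : ℝ → ℝ) (ha : Measurable a)
    (hann : ∀ s ∈ Set.Ioc (0:ℝ) (1/2), 0 ≤ a s)
    (hbound : ∀ h h' : ℝ, 0 < h → h < h' → h' ≤ 1/2 →
      (∫⁻ s in Set.Ioc h h', ENNReal.ofReal (a s ^ m))
        ≤ ENNReal.ofReal (C / (h' - h))) :
    (∫⁻ s in Set.Ioc (0:ℝ) (1/2), ENNReal.ofReal (a s))
      ≤ ENNReal.ofReal (C ^ (1/m) / ((2:ℝ) ^ ((m-2)/m) - 1)) :=
  dyadic_integrability_lemma_general m C hm hC a ha hbound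
end

section
/- Let r, k, a : (0,1) → ℝ be differentiable with r(t) > 0 for all t ∈ (0,1), and set l(t) = 3/(4 r(t)). Assume that on (0,1): k' = r, r' = −r·a, and a' = −(a² + (32/9) r³). Define ū(x,t) = k(t) + (1/2) a(t) x² and ρ̄(x,t) = r(t)(1 − x²/l(t)²). Then for every t ∈ (0,1) and every x ∈ ℝ with |x| < l(t), the pair (ū, ρ̄) satisfies ∂_t ū(x,t) + (1/2)(∂_x ū(x,t))² = ρ̄(x,t) and ∂_t ρ̄(x,t) + ∂_x(ρ̄ ∂_x ū)(x,t) = 0. -/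
/-!
With `l = 3 / (4 r)` the profile is `ρ̄ = r - (16/9) r³ x²`, so both equations become polynomial
identities in `x`. Comparing coefficients, the Hamilton–Jacobi equation reduces to `k' = r` and
`a' = -(a² + (32/9) r³)`, and the continuity equation to `r' = -r a`.
-/

theorem mul_one_sub_sq_div_sq_three_div_four_mul (r x : ℝ) :
    r * (1 - x ^ 2 / (3 / (4 * r)) ^ 2) = r - 16 / 9 * r ^ 3 * x ^ 2 := by
  rcases eq_or_ne r 0 with rfl | hr
  · simp
  · field_simp
    ring

theorem hasDerivAt_const_add_half_mul_sq (c b x : ℝ) :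
    HasDerivAt (fun y => c + 1 / 2 * b * y ^ 2) (b * x) x := by
  simpa [mul_comm, mul_left_comm, mul_assoc] using
    ((hasDerivAt_pow 2 x).const_mul (1 / 2 * b)).const_add c

theorem HasDerivAt.add_half_mul_mul_sq {k a : ℝ → ℝ} {k' a' t : ℝ} (hk : HasDerivAt k k' t)
    (ha : HasDerivAt a a' t) (x : ℝ) :
    HasDerivAt (fun s => k s + 1 / 2 * a s * x ^ 2) (k' + 1 / 2 * a' * x ^ 2) t :=
  hk.add ((ha.const_mul (1 / 2)).mul_const (x ^ 2))

theorem HasDerivAt.sub_const_mul_cube_mul {r : ℝ → ℝ} {r' t : ℝ} (hr : HasDerivAt r r' t)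
    (c x : ℝ) :
    HasDerivAt (fun s => r s - c * r s ^ 3 * x ^ 2) (r' * (1 - 3 * c * r t ^ 2 * x ^ 2)) t :=
  (hr.fun_sub (((hr.fun_pow 3).const_mul c).mul_const (x ^ 2))).congr_deriv (by ring)

theorem hasDerivAt_sub_const_mul_sq_mul_mul (r c b x : ℝ) :
    HasDerivAt (fun y => (r - c * y ^ 2) * (b * y)) (r * b - 3 * c * b * x ^ 2) x :=
  ((((hasDerivAt_pow 2 x).const_mul c).const_sub r).fun_mul
    ((hasDerivAt_id x).const_mul b)).congr_deriv (by simp only [id, mul_one]; ring)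

theorem physics_solution_solves_planning_general (r k a : ℝ → ℝ)
    (hrdiff : ∀ t ∈ Set.Ioo (0:ℝ) 1, DifferentiableAt ℝ r t)
    (hkdiff : ∀ t ∈ Set.Ioo (0:ℝ) 1, DifferentiableAt ℝ k t)
    (hadiff : ∀ t ∈ Set.Ioo (0:ℝ) 1, DifferentiableAt ℝ a t)
    (hk' : ∀ t ∈ Set.Ioo (0:ℝ) 1, deriv k t = r t)
    (hr' : ∀ t ∈ Set.Ioo (0:ℝ) 1, deriv r t = -(r t * a t))
    (ha' : ∀ t ∈ Set.Ioo (0:ℝ) 1, deriv a t = -((a t)^2 + 32/9 * (r t)^3))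
    (l : ℝ → ℝ) (hl : ∀ t, l t = 3 / (4 * r t))
    (u ρ : ℝ → ℝ → ℝ)
    (hu : ∀ x t, u x t = k t + (1/2) * a t * x^2)
    (hρ : ∀ x t, ρ x t = r t * (1 - x^2 / (l t)^2)) :
    ∀ t ∈ Set.Ioo (0:ℝ) 1, ∀ x : ℝ, |x| < l t →
      (deriv (fun s => u x s) t + (1/2) * (deriv (fun y => u y t) x)^2 = ρ x t) ∧
      (deriv (fun s => ρ x s) t
        + deriv (fun y => ρ y t * deriv (fun z => u z t) y) x = 0) := by
  intro t ht x _
  have hρ_poly (y s : ℝ) : ρ y s = r s - 16 / 9 * r s ^ 3 * y ^ 2 := by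
    rw [hρ, hl, mul_one_sub_sq_div_sq_three_div_four_mul]
  have hu_x (y : ℝ) : deriv (fun z => u z t) y = a t * y := by
    simp only [hu]
    exact (hasDerivAt_const_add_half_mul_sq _ _ y).deriv
  have hu_t : deriv (fun s => u x s) t = deriv k t + 1 / 2 * deriv a t * x ^ 2 := by
    simp only [hu]
    exact ((hkdiff t ht).hasDerivAt.add_half_mul_mul_sq (hadiff t ht).hasDerivAt x).deriv
  have hρ_t : deriv (fun s => ρ x s) t
      = deriv r t * (1 - 3 * (16 / 9) * r t ^ 2 * x ^ 2) := by
    simp only [hρ_poly]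
    exact ((hrdiff t ht).hasDerivAt.sub_const_mul_cube_mul _ x).deriv
  have hflux : deriv (fun y => ρ y t * deriv (fun z => u z t) y) x
      = r t * a t - 3 * (16 / 9 * r t ^ 3) * a t * x ^ 2 := by
    simp only [hρ_poly, hu_x]
    exact (hasDerivAt_sub_const_mul_sq_mul_mul _ _ _ x).deriv
  constructor
  · rw [hu_t, hu_x, hρ_poly, hk' t ht, ha' t ht]
    ring
  · rw [hρ_t, hflux, hr' t ht]
    ring

/-- The 'physics solution' (a quadratic `ū` and a parabolic profile `ρ̄`)
solves the first-order planning MFG system in the interior region `|x| < l t`,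
given the ODEs for `(k, r, a)`. -/
theorem physics_solution_solves_planning (r k a : ℝ → ℝ)
    (hrdiff : ∀ t ∈ Set.Ioo (0:ℝ) 1, DifferentiableAt ℝ r t)
    (hkdiff : ∀ t ∈ Set.Ioo (0:ℝ) 1, DifferentiableAt ℝ k t)
    (hadiff : ∀ t ∈ Set.Ioo (0:ℝ) 1, DifferentiableAt ℝ a t)
    (hrpos : ∀ t ∈ Set.Ioo (0:ℝ) 1, 0 < r t)
    (hk' : ∀ t ∈ Set.Ioo (0:ℝ) 1, deriv k t = r t)
    (hr' : ∀ t ∈ Set.Ioo (0:ℝ) 1, deriv r t = -(r t * a t))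
    (ha' : ∀ t ∈ Set.Ioo (0:ℝ) 1, deriv a t = -((a t)^2 + 32/9 * (r t)^3))
    (l : ℝ → ℝ) (hl : ∀ t, l t = 3 / (4 * r t))
    (u ρ : ℝ → ℝ → ℝ)
    (hu : ∀ x t, u x t = k t + (1/2) * a t * x^2)
    (hρ : ∀ x t, ρ x t = r t * (1 - x^2 / (l t)^2)) :
    ∀ t ∈ Set.Ioo (0:ℝ) 1, ∀ x : ℝ, |x| < l t →
      (deriv (fun s => u x s) t + (1/2) * (deriv (fun y => u y t) x)^2 = ρ x t) ∧
      (deriv (fun s => ρ x s) t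
        + deriv (fun y => ρ y t * deriv (fun z => u z t) y) x = 0) :=
  physics_solution_solves_planning_general r k a hrdiff hkdiff hadiff hk' hr' ha' l hl u ρ hu hρ
end

section
/- Let ε ∈ ℝ, T > 0, and let b : (0,T) → (0, ∞) be differentiable. Define p(x,s) = (2s)^{−1/2} exp(−x²/(4s)) for s > 0, and set ρ(x,t) = p(x, b(t)) and a(x,t) = ((b'(t) + ε)/(2 b(t))) · x. Then for every (x,t) ∈ ℝ × (0,T): ∂_t ρ(x,t) + ε ∂²_x ρ(x,t) + ∂_x(ρ a)(x,t) = 0. -/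
/-!
Write `L = ∂ₓ²p = ∂ₛp` (the heat equation) at `s = b(t)`. The chain rule gives `∂ₜρ = b' L`, and
the identity `∂ₓ(x p) = p + x ∂ₓp = -2s ∂ₓ²p` turns the drift term into `-(b' + ε) L`, which cancels
`∂ₜρ + ε ∂ₓ²ρ = (b' + ε) L`.
-/

open Real

noncomputable def gaussianKernel (x s : ℝ) : ℝ := (2 * s) ^ (-(1 / 2) : ℝ) * exp (-x ^ 2 / (4 * s))

noncomputable def gaussianKernelLaplacian (x s : ℝ) : ℝ :=
  gaussianKernel x s * (x ^ 2 / (4 * s ^ 2) - 1 / (2 * s))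

theorem hasDerivAt_gaussianKernel_fst (x s : ℝ) :
    HasDerivAt (gaussianKernel · s) (gaussianKernel x s * (-x / (2 * s))) x := by
  have hexp : HasDerivAt (fun y => -y ^ 2 / (4 * s)) (-x / (2 * s)) x :=
    ((hasDerivAt_pow 2 x).neg.div_const (4 * s)).congr_deriv (by field_simp; ring)
  exact (hexp.exp.const_mul _).congr_deriv (by rw [gaussianKernel]; ring)

theorem hasDerivAt_gaussianKernel_fst_fst (x s : ℝ) :
    HasDerivAt (fun y => gaussianKernel y s * (-y / (2 * s))) (gaussianKernelLaplacian x s) x :=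
  ((hasDerivAt_gaussianKernel_fst x s).mul ((hasDerivAt_neg' x).div_const (2 * s))).congr_deriv
    (by rw [gaussianKernelLaplacian]; field_simp; ring)

theorem hasDerivAt_gaussianKernel_snd (x : ℝ) {s : ℝ} (hs : 0 < s) :
    HasDerivAt (gaussianKernel x) (gaussianKernelLaplacian x s) s := by
  have hpow : HasDerivAt (fun u => (2 * u) ^ (-(1 / 2) : ℝ))
      (2 * -(1 / 2) * (2 * s) ^ (-(1 / 2) - 1 : ℝ)) s := by
    simpa using
      ((hasDerivAt_id s).const_mul 2).rpow_const (p := -(1 / 2)) (Or.inl (by simp; positivity))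
  have hexp : HasDerivAt (fun u => -x ^ 2 / (4 * u)) (x ^ 2 / (4 * s ^ 2)) s := by
    refine ((hasDerivAt_const s (-x ^ 2)).div ((hasDerivAt_id' s).const_mul 4)
      (by positivity)).congr_deriv ?_
    field_simp
    ring
  refine (hpow.mul hexp.exp).congr_deriv ?_
  rw [gaussianKernelLaplacian, gaussianKernel, rpow_sub (by positivity), rpow_one]
  field_simp
  ring

theorem deriv_gaussianKernel_fst (s : ℝ) :
    deriv (gaussianKernel · s) = fun x => gaussianKernel x s * (-x / (2 * s)) :=
  funext fun x => (hasDerivAt_gaussianKernel_fst x s).deriv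

theorem hasDerivAt_gaussianKernel_mul_linear (c x : ℝ) {s : ℝ} (hs : s ≠ 0) :
    HasDerivAt (fun y => gaussianKernel y s * (c * y))
      (-(2 * s * c) * gaussianKernelLaplacian x s) x :=
  ((hasDerivAt_gaussianKernel_fst x s).mul ((hasDerivAt_id' x).const_mul c)).congr_deriv
    (by rw [gaussianKernelLaplacian]; field_simp; ring)

theorem gaussian_competitor_solves_fokker_planck_general (ε T : ℝ)
    (b : ℝ → ℝ)
    (hbpos : ∀ t ∈ Set.Ioo (0:ℝ) T, 0 < b t)
    (hbdiff : ∀ t ∈ Set.Ioo (0:ℝ) T, DifferentiableAt ℝ b t)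
    (p : ℝ → ℝ → ℝ)
    (hp : ∀ x s : ℝ, p x s = (2*s) ^ (-(1/2) : ℝ) * Real.exp (-x^2 / (4*s)))
    (ρ a : ℝ → ℝ → ℝ)
    (hρ : ∀ x t : ℝ, ρ x t = p x (b t))
    (ha : ∀ x t : ℝ, a x t = ((deriv b t + ε) / (2 * b t)) * x) :
    ∀ t ∈ Set.Ioo (0:ℝ) T, ∀ x : ℝ,
      deriv (fun s => ρ x s) t + ε * deriv (deriv (fun y => ρ y t)) x
        + deriv (fun y => ρ y t * a y t) x = 0 := by
  intro t ht x
  have hρ_eq : ρ = fun y u => gaussianKernel y (b u) := by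
    funext y u
    rw [hρ, hp, gaussianKernel]
  have hs : 0 < b t := hbpos t ht
  have h_time : HasDerivAt (fun u => ρ x u) (gaussianKernelLaplacian x (b t) * deriv b t) t := by
    rw [hρ_eq]
    exact (hasDerivAt_gaussianKernel_snd x hs).comp t (hbdiff t ht).hasDerivAt
  have h_diffusion : deriv (deriv (fun y => ρ y t)) x = gaussianKernelLaplacian x (b t) := by
    rw [hρ_eq, deriv_gaussianKernel_fst]
    exact (hasDerivAt_gaussianKernel_fst_fst x (b t)).deriv
  have h_drift : HasDerivAt (fun y => ρ y t * a y t)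
      (-(2 * b t * ((deriv b t + ε) / (2 * b t))) * gaussianKernelLaplacian x (b t)) x := by
    simp only [hρ_eq, ha]
    exact hasDerivAt_gaussianKernel_mul_linear _ x hs.ne'
  rw [h_time.deriv, h_diffusion, h_drift.deriv]
  field_simp
  ring

/-- A time-changed Gaussian `ρ(x,t) = p(x, b(t))` with linear drift
`a(x,t) = ((b'(t)+ε)/(2b(t))) x` solves the Fokker–Planck constraint
`∂ₜρ + ε ∂ₓ²ρ + ∂ₓ(ρ a) = 0`, where `p(x,s) = (2s)^{-1/2} e^{-x²/(4s)}`. -/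
theorem gaussian_competitor_solves_fokker_planck (ε T : ℝ) (hT : 0 < T)
    (b : ℝ → ℝ)
    (hbpos : ∀ t ∈ Set.Ioo (0:ℝ) T, 0 < b t)
    (hbdiff : ∀ t ∈ Set.Ioo (0:ℝ) T, DifferentiableAt ℝ b t)
    (p : ℝ → ℝ → ℝ)
    (hp : ∀ x s : ℝ, p x s = (2*s) ^ (-(1/2) : ℝ) * Real.exp (-x^2 / (4*s)))
    (ρ a : ℝ → ℝ → ℝ)
    (hρ : ∀ x t : ℝ, ρ x t = p x (b t))
    (ha : ∀ x t : ℝ, a x t = ((deriv b t + ε) / (2 * b t)) * x) :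
    ∀ t ∈ Set.Ioo (0:ℝ) T, ∀ x : ℝ,
      deriv (fun s => ρ x s) t + ε * deriv (deriv (fun y => ρ y t)) x
        + deriv (fun y => ρ y t * a y t) x = 0 :=
  gaussian_competitor_solves_fokker_planck_general ε T b hbpos hbdiff p hp ρ a hρ ha
end
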